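/- Fix a real number t, a real σ > 0, and trimming proportions a, b with 0 ≤ a, 0 < b and a + b < 1. For θ ∈ ℝ write γ(θ) = (t − θ)/σ and define c_{y,2}(θ) = (1/(1 − a − b))·∫_a^{1−b} (Φ⁻¹(s + (1 − s)·Φ(γ(θ))))² ds. Then c_{y,2} is differentiable in θ with derivative c_{y,2}'(θ) = −(2·φ(γ(θ)) / (σ·(1 − a − b)))·∫_a^{1−b} (1 − s)·Φ⁻¹(s + (1 − s)·Φ(γ(θ))) / φ(Φ⁻¹(s + (1 − s)·Φ(γ(θ)))) ds. -/

import Mathlib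

/-! Differentiate under the integral sign. The argument `s + (1 - s) * Φ(γ(θ))` stays in `(0, 1)`,
where `Φ⁻¹` has derivative `1 / φ(Φ⁻¹)` by the inverse function theorem, so the `θ`-derivative of
the integrand is jointly continuous in `(θ, s)`; on a compact `θ`-window times `[a, 1 - b]` it is
therefore bounded, and dominated convergence applies. -/

open Real MeasureTheory

/-- Standard normal density `φ(x) = (2π)^(−1/2) exp(−x²/2)`. -/
noncomputable def stdPDF (x : ℝ) : ℝ := (Real.sqrt (2 * Real.pi))⁻¹ * Real.exp (-x ^ 2 / 2)

/-- Standard normal cumulative distribution function `Φ(x) = ∫_{−∞}^x φ(u) du`. -/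
noncomputable def stdCDF (x : ℝ) : ℝ := ∫ u in Set.Iic x, stdPDF u

/-- Mills hazard `h(γ) = φ(γ)/(1 − Φ(γ))`. -/
noncomputable def millsHazard (γ : ℝ) : ℝ := stdPDF γ / (1 - stdCDF γ)

/-- The standard normal quantile function `Φ⁻¹`, the inverse of `Φ`. -/
noncomputable def stdQuantile : ℝ → ℝ := Function.invFun stdCDF

open Filter Set Topology ProbabilityTheory
open scoped Interval

lemma stdPDF_eq_gaussianPDFReal : stdPDF = gaussianPDFReal 0 1 := by
  ext x
  simp [stdPDF, gaussianPDFReal]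

lemma continuous_stdPDF : Continuous stdPDF := by
  unfold stdPDF; fun_prop

lemma stdPDF_pos (x : ℝ) : 0 < stdPDF x := by
  rw [stdPDF_eq_gaussianPDFReal]; exact gaussianPDFReal_pos _ _ _ one_ne_zero

lemma integrable_stdPDF : Integrable stdPDF := by
  rw [stdPDF_eq_gaussianPDFReal]; exact integrable_gaussianPDFReal _ _

lemma stdCDF_eq_cdf : stdCDF = cdf (gaussianReal 0 1) := by
  ext x
  rw [cdf_eq_real, measureReal_def, gaussianReal_apply_eq_integral _ one_ne_zero,
    ENNReal.toReal_ofReal (setIntegral_nonneg measurableSet_Iic fun u _ =>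
      gaussianPDFReal_nonneg _ _ u), stdCDF, stdPDF_eq_gaussianPDFReal]

lemma hasStrictDerivAt_stdCDF (x : ℝ) : HasStrictDerivAt stdCDF (stdPDF x) x := by
  have hsplit : stdCDF = fun y => stdCDF 0 + ∫ u in (0 : ℝ)..y, stdPDF u := by
    ext y
    rw [← intervalIntegral.integral_Iic_sub_Iic integrable_stdPDF.integrableOn
      integrable_stdPDF.integrableOn, stdCDF, stdCDF]
    ring
  rw [hsplit]
  exact (continuous_stdPDF.integral_hasStrictDerivAt 0 x).const_add _

lemma continuous_stdCDF : Continuous stdCDF :=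
  continuous_iff_continuousAt.2 fun x => (hasStrictDerivAt_stdCDF x).hasDerivAt.continuousAt

lemma strictMono_stdCDF : StrictMono stdCDF :=
  strictMono_of_hasDerivAt_pos (fun x => (hasStrictDerivAt_stdCDF x).hasDerivAt) stdPDF_pos

lemma stdCDF_mem_Ioo (x : ℝ) : stdCDF x ∈ Ioo 0 1 := by
  have hmono := strictMono_stdCDF
  rw [stdCDF_eq_cdf] at hmono ⊢
  exact ⟨(cdf_nonneg _ _).trans_lt (hmono (sub_one_lt x)),
    (hmono (lt_add_one x)).trans_le (cdf_le_one _ _)⟩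

lemma Ioo_subset_range_stdCDF : Ioo 0 1 ⊆ range stdCDF := by
  intro y ⟨hy0, hy1⟩
  have hcont := continuous_stdCDF
  rw [stdCDF_eq_cdf] at hcont ⊢
  exact mem_range_of_exists_le_of_exists_ge hcont
    (((tendsto_cdf_atBot (μ := gaussianReal 0 1)).eventually_le_const hy0).exists)
    (((tendsto_cdf_atTop (μ := gaussianReal 0 1)).eventually_const_le hy1).exists)

lemma stdQuantile_stdCDF (x : ℝ) : stdQuantile (stdCDF x) = x :=
  Function.leftInverse_invFun strictMono_stdCDF.injective x

lemma hasDerivAt_stdQuantile {y : ℝ} (hy : y ∈ Ioo 0 1) :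
    HasDerivAt stdQuantile (stdPDF (stdQuantile y))⁻¹ y := by
  obtain ⟨x, rfl⟩ := Ioo_subset_range_stdCDF hy
  rw [stdQuantile_stdCDF]
  exact ((hasStrictDerivAt_stdCDF x).to_local_left_inverse (stdPDF_pos x).ne'
    (Eventually.of_forall stdQuantile_stdCDF)).hasDerivAt

lemma continuousOn_stdQuantile : ContinuousOn stdQuantile (Ioo 0 1) :=
  fun _ hy => (hasDerivAt_stdQuantile hy).continuousAt.continuousWithinAt

theorem intervalIntegral.hasDerivAt_integral_of_continuousOn {E : Type*} [NormedAddCommGroup E]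
    [NormedSpace ℝ E] {F F' : ℝ → ℝ → E} {K : Set ℝ} {x₀ a b : ℝ} (hK : IsCompact K)
    (hx₀ : K ∈ 𝓝 x₀) (hF : ∀ x ∈ K, ContinuousOn (F x) [[a, b]])
    (hF' : ContinuousOn (Function.uncurry F') (K ×ˢ [[a, b]]))
    (hdiff : ∀ x ∈ K, ∀ s ∈ [[a, b]], HasDerivAt (F · s) (F' x s) x) :
    HasDerivAt (fun x => ∫ s in a..b, F x s) (∫ s in a..b, F' x₀ s) x₀ := by
  obtain ⟨C, hC⟩ := (hK.prod isCompact_uIcc).exists_bound_of_continuousOn hF'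
  have hx₀K : x₀ ∈ K := mem_of_mem_nhds hx₀
  have hF'x₀ : ContinuousOn (F' x₀) [[a, b]] :=
    hF'.comp (continuous_const.prodMk continuous_id).continuousOn fun s hs => ⟨hx₀K, hs⟩
  refine (intervalIntegral.hasDerivAt_integral_of_dominated_loc_of_deriv_le (bound := fun _ => C)
    hx₀ ?_ ((hF x₀ hx₀K).intervalIntegrable) ?_ ?_ intervalIntegrable_const ?_).2
  · filter_upwards [hx₀] with x hx
    exact ((hF x hx).mono uIoc_subset_uIcc).aestronglyMeasurable measurableSet_uIoc
  · exact (hF'x₀.mono uIoc_subset_uIcc).aestronglyMeasurable measurableSet_uIoc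
  · exact Eventually.of_forall fun s hs x hx => hC (x, s) ⟨hx, uIoc_subset_uIcc hs⟩
  · exact Eventually.of_forall fun s hs x hx => hdiff x hx s (uIoc_subset_uIcc hs)

lemma add_one_sub_mul_mem_Ioo {s p : ℝ} (hs : s ∈ Ico 0 1) (hp : p ∈ Ioo 0 1) :
    s + (1 - s) * p ∈ Ioo 0 1 := by
  obtain ⟨hs0, hs1⟩ := hs
  obtain ⟨hp0, hp1⟩ := hp
  constructor <;> nlinarith

theorem hasDerivAt_integral_stdQuantile_sq {c c' : ℝ → ℝ} {a b x₀ : ℝ} (ha : 0 ≤ a)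
    (hab : a ≤ b) (hb : b < 1) (hc : ∀ x, HasDerivAt c (c' x) x) (hc' : Continuous c')
    (hc01 : ∀ x, c x ∈ Ioo 0 1) :
    HasDerivAt (fun x => ∫ s in a..b, stdQuantile (s + (1 - s) * c x) ^ 2)
      (2 * c' x₀ * ∫ s in a..b, (1 - s) * stdQuantile (s + (1 - s) * c x₀) /
        stdPDF (stdQuantile (s + (1 - s) * c x₀))) x₀ := by
  have hu : ∀ x, ∀ s ∈ [[a, b]], s + (1 - s) * c x ∈ Ioo 0 1 := fun x s hs => by
    rw [uIcc_of_le hab] at hs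
    exact add_one_sub_mul_mem_Ioo ⟨ha.trans hs.1, hs.2.trans_lt hb⟩ (hc01 x)
  have hc_cont : Continuous c := continuous_iff_continuousAt.2 fun x => (hc x).continuousAt
  have hQ : ContinuousOn (fun p : ℝ × ℝ => stdQuantile (p.2 + (1 - p.2) * c p.1))
      (univ ×ˢ [[a, b]]) :=
    continuousOn_stdQuantile.comp (Continuous.continuousOn (by fun_prop))
      fun p hp => hu p.1 p.2 hp.2
  have hF : ∀ x, ContinuousOn (fun s => stdQuantile (s + (1 - s) * c x) ^ 2) [[a, b]] :=
    fun x => (hQ.comp (continuous_const.prodMk continuous_id).continuousOn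
      fun s hs => ⟨mem_univ x, hs⟩).pow 2
  have hF' : ContinuousOn (fun p : ℝ × ℝ => 2 * stdQuantile (p.2 + (1 - p.2) * c p.1) *
      ((stdPDF (stdQuantile (p.2 + (1 - p.2) * c p.1)))⁻¹ * ((1 - p.2) * c' p.1)))
      (univ ×ˢ [[a, b]]) :=
    (continuousOn_const.mul hQ).mul (((continuous_stdPDF.comp_continuousOn hQ).inv₀
      fun _ _ => (stdPDF_pos _).ne').mul (Continuous.continuousOn (by fun_prop)))
  have hdiff : ∀ x, ∀ s ∈ [[a, b]], HasDerivAt (fun x => stdQuantile (s + (1 - s) * c x) ^ 2)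
      (2 * stdQuantile (s + (1 - s) * c x) *
        ((stdPDF (stdQuantile (s + (1 - s) * c x)))⁻¹ * ((1 - s) * c' x))) x := fun x s hs => by
    simpa using ((hasDerivAt_stdQuantile (hu x s hs)).comp x
      (((hc x).const_mul (1 - s)).const_add s)).fun_pow 2
  refine (intervalIntegral.hasDerivAt_integral_of_continuousOn (isCompact_closedBall x₀ 1)
    (Metric.closedBall_mem_nhds x₀ one_pos) (fun x _ => hF x)
    ?_ fun x _ => hdiff x).congr_deriv ?_
  · exact hF'.mono (prod_mono (subset_univ _) le_rfl)
  · rw [← intervalIntegral.integral_const_mul]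
    refine intervalIntegral.integral_congr fun s _ => ?_
    ring

theorem cY2_hasDerivAt_general (t σ a b : ℝ) (ha : 0 ≤ a) (hb : 0 < b)
    (hab : a + b < 1) (θ : ℝ) :
    HasDerivAt
      (fun θ' : ℝ => (1 - a - b)⁻¹ *
        ∫ s in a..(1 - b), (stdQuantile (s + (1 - s) * stdCDF ((t - θ') / σ))) ^ 2)
      (-(2 * stdPDF ((t - θ) / σ) / (σ * (1 - a - b))) *
        ∫ s in a..(1 - b),
          (1 - s) * stdQuantile (s + (1 - s) * stdCDF ((t - θ) / σ)) /
            stdPDF (stdQuantile (s + (1 - s) * stdCDF ((t - θ) / σ))))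
      θ := by
  have hγ : ∀ x, HasDerivAt (fun x => (t - x) / σ) (-1 / σ) x := fun x => by
    simpa using ((hasDerivAt_id x).const_sub t).div_const σ
  have hc : ∀ x, HasDerivAt (fun x => stdCDF ((t - x) / σ)) (stdPDF ((t - x) / σ) * (-1 / σ)) x :=
    fun x => (hasStrictDerivAt_stdCDF _).hasDerivAt.comp x (hγ x)
  have hc' : Continuous fun x => stdPDF ((t - x) / σ) * (-1 / σ) :=
    (continuous_stdPDF.comp (by fun_prop)).mul continuous_const
  refine ((hasDerivAt_integral_stdQuantile_sq ha (by linarith) (by linarith) hc hc'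
    fun x => stdCDF_mem_Ioo _).const_mul (1 - a - b)⁻¹).congr_deriv ?_
  rw [div_mul_eq_div_div]
  ring

/-- Differentiability of `c_{y,2}(θ)` with the stated derivative. -/
theorem cY2_hasDerivAt (t σ a b : ℝ) (hσ : 0 < σ) (ha : 0 ≤ a) (hb : 0 < b)
    (hab : a + b < 1) (θ : ℝ) :
    HasDerivAt
      (fun θ' : ℝ => (1 - a - b)⁻¹ *
        ∫ s in a..(1 - b), (stdQuantile (s + (1 - s) * stdCDF ((t - θ') / σ))) ^ 2)
      (-(2 * stdPDF ((t - θ) / σ) / (σ * (1 - a - b))) *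
        ∫ s in a..(1 - b),
          (1 - s) * stdQuantile (s + (1 - s) * stdCDF ((t - θ) / σ)) /
            stdPDF (stdQuantile (s + (1 - s) * stdCDF ((t - θ) / σ))))
      θ :=
  cY2_hasDerivAt_general t σ a b ha hb hab θ
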